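/- For n ≥ 2 and integers k with 1 ≤ k < n/2, P(Binomial(n, k/n) ≤ k-1) > P(Binomial(n, k/n) ≥ k+1), i.e. F_{n,k/n}(k-1) > 1 - F_{n,k/n}(k). -/

import Mathlib

/-!
Write `m = n - k`, `p = k / n`, `q = 1 - p`. Differentiating the binomial cdf in `p` (the Bernstein
polynomials telescope) turns both tails into incomplete beta integrals:
`1 - F(k) = n C(n-1,k) ∫₀^p t^k (1-t)^(m-1)` and `F(k-1) = n C(n-1,k-1) ∫₀^q t^m (1-t)^(k-1)`,
and `k C(n-1,k) = m C(n-1,k-1)`. The substitutions `t = p a^m` and `t = q a^k` put both integrals on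
`[0,1]`, where the two integrands agree at `a = 1` because `m p = k q`. The logarithm of their ratio is
monotone in `a`: after clearing denominators the sign of its derivative reduces to the elementary
inequality `m x^m ≤ k x^k + (m-k) x^(k+m)` on `[0,1]`. Hence the integrands compare strictly on `(0,1)`.
-/

open Finset

/-- Binomial probability mass function `f_{n,p}(k)`. -/
noncomputable def binomPmf (n : ℕ) (p : ℝ) (k : ℕ) : ℝ :=
  (n.choose k : ℝ) * p ^ k * (1 - p) ^ (n - k)

/-- Binomial cumulative distribution function `F_{n,p}(k) = P(B ≤ k)`. -/
noncomputable def binomCdf (n : ℕ) (p : ℝ) (k : ℕ) : ℝ :=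
  ∑ j ∈ Finset.range (k + 1), binomPmf n p j

/-- Binomial upper tail `P(B ≥ x) = ∑_{k=x}^n f_{n,p}(k)`. -/
noncomputable def binomTail (n : ℕ) (p : ℝ) (x : ℕ) : ℝ :=
  ∑ k ∈ Finset.Icc x n, binomPmf n p k

open Real

lemma binomPmf_eq_eval_bernsteinPolynomial (n j : ℕ) (p : ℝ) :
    binomPmf n p j = (bernsteinPolynomial ℝ n j).eval p := by
  simp [binomPmf, bernsteinPolynomial]

lemma continuous_binomPmf (n r : ℕ) : Continuous fun t => binomPmf n t r := by
  unfold binomPmf; fun_prop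

lemma hasDerivAt_binomPmf_zero (n : ℕ) (x : ℝ) :
    HasDerivAt (fun p => binomPmf n p 0) (-(n * binomPmf (n - 1) x 0)) x := by
  simp_rw [binomPmf_eq_eval_bernsteinPolynomial]
  simpa [bernsteinPolynomial.derivative_zero] using (bernsteinPolynomial ℝ n 0).hasDerivAt x

lemma hasDerivAt_binomPmf_succ (n j : ℕ) (x : ℝ) :
    HasDerivAt (fun p => binomPmf n p (j + 1))
      (n * (binomPmf (n - 1) x j - binomPmf (n - 1) x (j + 1))) x := by
  simp_rw [binomPmf_eq_eval_bernsteinPolynomial]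
  simpa [bernsteinPolynomial.derivative_succ] using (bernsteinPolynomial ℝ n (j + 1)).hasDerivAt x

lemma hasDerivAt_binomCdf (n r : ℕ) (x : ℝ) :
    HasDerivAt (fun p => binomCdf n p r) (-(n * binomPmf (n - 1) x r)) x := by
  have h := (hasDerivAt_binomPmf_zero n x).add
    (HasDerivAt.fun_sum fun j (_ : j ∈ range r) => hasDerivAt_binomPmf_succ n j x)
  rw [← mul_sum, sum_range_sub'] at h
  have hcdf : (fun p => binomCdf n p r) =
      (fun p => binomPmf n p 0) + fun p => ∑ j ∈ range r, binomPmf n p (j + 1) := by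
    ext p; simp [binomCdf, sum_range_succ', add_comm]
  rw [hcdf]
  exact h.congr_deriv (by ring)

lemma binomCdf_prob_zero (n r : ℕ) : binomCdf n 0 r = 1 := by
  simp [binomCdf, sum_range_succ', binomPmf]

lemma binomCdf_prob_one {n r : ℕ} (hr : r < n) : binomCdf n 1 r = 0 := by
  refine sum_eq_zero fun j hj => ?_
  have : n - j ≠ 0 := by have := mem_range.1 hj; omega
  simp [binomPmf, this]

lemma one_sub_binomCdf_eq_integral_binomPmf (n r : ℕ) (x : ℝ) :
    1 - binomCdf n x r = n * ∫ t in (0)..x, binomPmf (n - 1) t r := by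
  rw [← intervalIntegral.integral_const_mul, ← neg_neg (∫ _ in _.._, _),
    ← intervalIntegral.integral_neg, intervalIntegral.integral_eq_sub_of_hasDerivAt
      (fun t _ => hasDerivAt_binomCdf n r t)
      (((continuous_binomPmf _ r).const_mul _).neg.intervalIntegrable _ _),
    binomCdf_prob_zero]
  ring

lemma one_sub_binomCdf_eq_integral (n r : ℕ) (x : ℝ) :
    1 - binomCdf n x r = n * (n - 1).choose r * ∫ t in (0)..x, t ^ r * (1 - t) ^ (n - 1 - r) := by
  rw [one_sub_binomCdf_eq_integral_binomPmf, mul_assoc,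
    ← intervalIntegral.integral_const_mul ((n - 1).choose r : ℝ)]
  simp only [binomPmf, mul_assoc]

lemma binomCdf_eq_integral {n r : ℕ} (hr : r < n) (x : ℝ) :
    binomCdf n x r = n * (n - 1).choose r * ∫ t in (0)..(1 - x), t ^ (n - 1 - r) * (1 - t) ^ r := by
  have hint (a b : ℝ) :=
    (continuous_binomPmf (n - 1) r).intervalIntegrable (μ := MeasureTheory.volume) a b
  have hreflect : ∫ t in (0)..(1 - x), binomPmf (n - 1) (1 - t) r
      = (n - 1).choose r * ∫ t in (0)..(1 - x), t ^ (n - 1 - r) * (1 - t) ^ r := by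
    rw [← intervalIntegral.integral_const_mul]
    congr 1; ext t
    rw [binomPmf, sub_sub_cancel]; ring
  rw [mul_assoc, ← hreflect,
    intervalIntegral.integral_comp_sub_left (fun t => binomPmf (n - 1) t r), sub_sub_cancel,
    sub_zero, ← intervalIntegral.integral_interval_sub_left (hint 0 1) (hint 0 x), mul_sub,
    ← one_sub_binomCdf_eq_integral_binomPmf, ← one_sub_binomCdf_eq_integral_binomPmf,
    binomCdf_prob_one hr]
  ring

lemma integral_eq_integral_comp_mul_pow {j : ℕ} (hj : j ≠ 0) (c : ℝ) {f : ℝ → ℝ}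
    (hf : Continuous f) :
    ∫ t in (0)..c, f t = ∫ a in (0)..1, f (c * a ^ j) * (c * (j * a ^ (j - 1))) := by
  have h := intervalIntegral.integral_comp_mul_deriv (a := 0) (b := 1)
    (fun a _ => (hasDerivAt_pow j a).const_mul c) (by fun_prop) hf
  simpa [hj] using h.symm

lemma natCast_mul_pow_mul_one_sub_pow_le {x : ℝ} (hx0 : 0 ≤ x) (hx1 : x ≤ 1) (d k : ℕ) :
    d * x ^ d * (1 - x ^ k) ≤ k * (1 - x ^ d) := by
  have bernoulli : 1 - x ^ k ≤ k * (1 - x) := by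
    have := one_add_mul_le_pow (a := x - 1) (by linarith) k
    rw [add_sub_cancel] at this
    linarith
  have geom : d * x ^ d * (1 - x) ≤ 1 - x ^ d := by
    have hsum : d * x ^ d ≤ ∑ i ∈ range d, x ^ i := by
      simpa using card_nsmul_le_sum (range d) (x ^ ·) (x ^ d)
        fun i hi => pow_le_pow_of_le_one hx0 hx1 (mem_range.1 hi).le
    rw [← mul_neg_geom_sum]
    nlinarith
  calc d * x ^ d * (1 - x ^ k) ≤ d * x ^ d * (k * (1 - x)) := by gcongr
    _ = k * (d * x ^ d * (1 - x)) := by ring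
    _ ≤ k * (1 - x ^ d) := by gcongr

lemma natCast_mul_pow_le_of_le {k m : ℕ} (hkm : k ≤ m) {x : ℝ} (hx0 : 0 ≤ x) (hx1 : x ≤ 1) :
    m * x ^ m ≤ k * x ^ k + (m - k) * (x ^ k * x ^ m) := by
  obtain ⟨d, rfl⟩ := Nat.exists_eq_add_of_le hkm
  have h := mul_le_mul_of_nonneg_left (natCast_mul_pow_mul_one_sub_pow_le hx0 hx1 d k)
    (pow_nonneg hx0 k)
  push_cast
  rw [pow_add]
  nlinarith

lemma one_sub_mul_pow_pos {r a : ℝ} (hr : r < 1) (ha0 : 0 ≤ a) (ha1 : a ≤ 1) (j : ℕ) :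
    0 < 1 - r * a ^ j := by
  have := pow_le_one₀ ha0 ha1 (n := j)
  rcases le_or_gt r 0 with hr0 | hr0 <;> nlinarith [pow_nonneg ha0 j]

section

variable {k m : ℕ} {p q : ℝ}

/-- Up to an additive constant, the logarithm of the ratio of the two integrands obtained from
`t ^ k * (1 - t) ^ (m - 1)` on `[0, p]` and `t ^ m * (1 - t) ^ (k - 1)` on `[0, q]` by the
substitutions `t = p * a ^ m` and `t = q * a ^ k`. -/
noncomputable def logRatio (k m : ℕ) (p q a : ℝ) : ℝ :=
  (m - k) * log a + (m - 1) * log (1 - p * a ^ m) - (k - 1) * log (1 - q * a ^ k)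

lemma hasDerivAt_logRatio {a : ℝ} (ha : a ≠ 0) (hpa : 1 - p * a ^ m ≠ 0)
    (hqa : 1 - q * a ^ k ≠ 0) :
    HasDerivAt (logRatio k m p q)
      ((m - k) * a⁻¹ + (m - 1) * (-(p * (m * a ^ (m - 1))) / (1 - p * a ^ m))
        - (k - 1) * (-(q * (k * a ^ (k - 1))) / (1 - q * a ^ k))) a := by
  have hlog (r : ℝ) (j : ℕ) (hr : 1 - r * a ^ j ≠ 0) :
      HasDerivAt (fun y => log (1 - r * y ^ j)) (-(r * (j * a ^ (j - 1))) / (1 - r * a ^ j)) a :=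
    (((hasDerivAt_pow j a).const_mul r).const_sub 1).log hr
  exact (((hasDerivAt_log ha).const_mul _).add ((hlog p m hpa).const_mul _)).sub
    ((hlog q k hqa).const_mul _)

lemma logRatio_deriv_numerator_lt (hk : 1 ≤ k) (hkm : k < m) (hp : 0 < p) (hq : 0 < q)
    (hpq : p + q = 1) (hkq : m * p = k * q) {a : ℝ} (ha0 : 0 < a) (ha1 : a < 1) :
    (m - 1) * m * p * a ^ m * (1 - q * a ^ k) - (k - 1) * k * q * a ^ k * (1 - p * a ^ m)
      < (m - k) * (1 - p * a ^ m) * (1 - q * a ^ k) := by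
  have hk' : (1 : ℝ) ≤ k := by exact_mod_cast hk
  have hkm' : (k : ℝ) < m := by exact_mod_cast hkm
  have hD1 := one_sub_mul_pow_pos (by linarith : p < 1) ha0.le ha1.le m
  have hX1 : a ^ k < 1 := pow_lt_one₀ ha0.le ha1 (by omega)
  set X := a ^ k
  set Y := a ^ m
  have key : m * Y * (1 - q * X) ≤ k * X * (1 - p * Y) := by
    have hcoef : m * q - k * p = m - k := by linear_combination (m - k) * hpq - hkq
    have e : m * Y * (1 - q * X) - k * X * (1 - p * Y) = m * Y - k * X - (m - k) * (X * Y) := by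
      linear_combination (-(X * Y)) * hcoef
    linarith [natCast_mul_pow_le_of_le hkm.le ha0.le ha1.le]
  calc (m - 1) * m * p * Y * (1 - q * X) - (k - 1) * k * q * X * (1 - p * Y)
      ≤ (m - 1) * p * (k * X * (1 - p * Y)) - (k - 1) * (m * p) * X * (1 - p * Y) := by
        have hm1 : 0 ≤ ((m : ℝ) - 1) * p := mul_nonneg (by linarith) hp.le
        have e : (k - 1) * k * q * X * (1 - p * Y) = (k - 1) * (m * p) * X * (1 - p * Y) := by
          rw [hkq]; ring
        nlinarith [mul_le_mul_of_nonneg_left key hm1]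
    _ = (m - k) * (1 - p * Y) * (p * X) := by ring
    _ < (m - k) * (1 - p * Y) * (1 - q * X) := by
        have : p * X + q * X = X := by rw [← add_mul, hpq, one_mul]
        gcongr
        linarith

lemma strictMonoOn_logRatio (hk : 1 ≤ k) (hkm : k < m) (hp : 0 < p) (hq : 0 < q)
    (hpq : p + q = 1) (hkq : m * p = k * q) :
    StrictMonoOn (logRatio k m p q) (Set.Ioc 0 1) := by
  have hp1 : p < 1 := by linarith
  have hq1 : q < 1 := by linarith
  have hderiv {a : ℝ} (ha : a ∈ Set.Ioc (0 : ℝ) 1) := hasDerivAt_logRatio (k := k) (m := m)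
    ha.1.ne' (one_sub_mul_pow_pos hp1 ha.1.le ha.2 m).ne'
    (one_sub_mul_pow_pos hq1 ha.1.le ha.2 k).ne'
  refine strictMonoOn_of_deriv_pos (convex_Ioc 0 1)
    (fun a ha => (hderiv ha).continuousAt.continuousWithinAt) fun a ha => ?_
  rw [interior_Ioc] at ha
  rw [(hderiv (Set.Ioo_subset_Ioc_self ha)).deriv]
  have hnum := logRatio_deriv_numerator_lt hk hkm hp hq hpq hkq ha.1 ha.2
  have hD1 := one_sub_mul_pow_pos hp1 ha.1.le ha.2.le m
  have hD2 := one_sub_mul_pow_pos hq1 ha.1.le ha.2.le k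
  have ha0 := ha.1.ne'
  -- the derivative is the difference in `hnum` divided by `a * (1 - p * a ^ m) * (1 - q * a ^ k)`
  rw [pow_sub₀ a ha0 (by omega : 1 ≤ m), pow_sub₀ a ha0 hk, pow_one]
  field_simp
  rw [zero_mul, zero_mul]
  exact div_pos (by linarith) ha.1

lemma pow_mul_pow_mul_one_sub_pow_lt (hk : 1 ≤ k) (hkm : k < m) (hp : 0 < p) (hq : 0 < q)
    (hpq : p + q = 1) (hkq : m * p = k * q) {a : ℝ} (ha0 : 0 < a) (ha1 : a < 1) :
    p ^ (k - 1) * a ^ (m - k) * (1 - p * a ^ m) ^ (m - 1)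
      < q ^ (m - 1) * (1 - q * a ^ k) ^ (k - 1) := by
  have hD1 := one_sub_mul_pow_pos (by linarith : p < 1) ha0.le ha1.le m
  have hD2 := one_sub_mul_pow_pos (by linarith : q < 1) ha0.le ha1.le k
  have hmono := strictMonoOn_logRatio hk hkm hp hq hpq hkq ⟨ha0, ha1.le⟩ ⟨one_pos, le_rfl⟩ ha1
  rw [← log_lt_log_iff (by positivity) (by positivity), log_mul (by positivity) (by positivity),
    log_mul (by positivity) (by positivity), log_mul (by positivity) (by positivity)]
  simp only [log_pow, logRatio, one_pow, mul_one, log_one] at hmono ⊢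
  rw [show 1 - p = q by linarith, show 1 - q = p by linarith] at hmono
  push_cast [Nat.cast_sub hk, Nat.cast_sub hkm.le, Nat.cast_sub (hk.trans hkm.le)]
  linarith

theorem mul_integral_lt_mul_integral (hk : 1 ≤ k) (hkm : k < m) (hp : 0 < p) (hq : 0 < q)
    (hpq : p + q = 1) (hkq : m * p = k * q) :
    m * ∫ t in (0)..p, t ^ k * (1 - t) ^ (m - 1)
      < k * ∫ t in (0)..q, t ^ m * (1 - t) ^ (k - 1) := by
  rw [integral_eq_integral_comp_mul_pow (j := m) (by omega) p (by fun_prop),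
    integral_eq_integral_comp_mul_pow (j := k) (by omega) q (by fun_prop),
    ← intervalIntegral.integral_const_mul, ← intervalIntegral.integral_const_mul, ← sub_pos,
    ← intervalIntegral.integral_sub (by apply Continuous.intervalIntegrable; fun_prop)
      (by apply Continuous.intervalIntegrable; fun_prop)]
  refine intervalIntegral.intervalIntegral_pos_of_pos_on
    (by apply Continuous.intervalIntegrable; fun_prop) (fun a ⟨ha0, ha1⟩ => sub_pos.2 ?_) one_pos
  have hlt := pow_mul_pow_mul_one_sub_pow_lt hk hkm hp hq hpq hkq ha0 ha1
  obtain ⟨i, rfl⟩ : ∃ i, k = i + 1 := ⟨k - 1, by omega⟩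
  obtain ⟨d, rfl⟩ : ∃ d, m = i + 1 + d := ⟨m - (i + 1), by omega⟩
  simp only [Nat.add_sub_cancel, Nat.add_sub_cancel_left, show i + 1 + d - 1 = i + d by omega]
    at hlt ⊢
  have hscale : 0 < (((i + 1 + d : ℕ) : ℝ) * p) ^ 2 * a ^ ((i + 1) * (i + 1 + d) + i) := by
    positivity
  calc _ = (((i + 1 + d : ℕ) : ℝ) * p) ^ 2 * a ^ ((i + 1) * (i + 1 + d) + i) *
        (p ^ i * a ^ d * (1 - p * a ^ (i + 1 + d)) ^ (i + d)) := by ring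
    _ < (((i + 1 + d : ℕ) : ℝ) * p) ^ 2 * a ^ ((i + 1) * (i + 1 + d) + i) *
        (q ^ (i + d) * (1 - q * a ^ (i + 1)) ^ i) := mul_lt_mul_of_pos_left hlt hscale
    _ = _ := by rw [hkq]; ring

end

theorem simmons_inequality_general (n k : ℕ) (hk1 : 1 ≤ k) (hk : 2 * k < n) :
    binomCdf n ((k : ℝ) / n) (k - 1) > 1 - binomCdf n ((k : ℝ) / n) k := by
  obtain ⟨m, rfl⟩ : ∃ m, n = k + m := ⟨n - k, by omega⟩
  set p : ℝ := k / (k + m : ℕ)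
  have hn : (0 : ℝ) < (k + m : ℕ) := by exact_mod_cast (by omega : 0 < k + m)
  have hk0 : (0 : ℝ) < k := by exact_mod_cast hk1
  have hp : 0 < p := div_pos hk0 hn
  have hq : 0 < 1 - p := by
    rw [sub_pos, div_lt_one hn]; exact_mod_cast (by omega : k < k + m)
  have hkq : m * p = k * (1 - p) := by
    simp only [p]; field_simp; push_cast; ring
  have core := mul_integral_lt_mul_integral hk1 (by omega) hp hq (by ring) hkq
  have hchoose : ((k + m - 1).choose k : ℝ) * k = (k + m - 1).choose (k - 1) * m := by
    have h := Nat.choose_succ_right_eq (k + m - 1) (k - 1)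
    rw [Nat.sub_add_cancel hk1, show k + m - 1 - (k - 1) = m by omega] at h
    exact_mod_cast h
  have hC : (0 : ℝ) < (k + m - 1).choose (k - 1) := by exact_mod_cast Nat.choose_pos (by omega)
  rw [binomCdf_eq_integral (by omega), one_sub_binomCdf_eq_integral,
    show k + m - 1 - (k - 1) = m by omega, show k + m - 1 - k = m - 1 by omega, mul_assoc, mul_assoc]
  refine mul_lt_mul_of_pos_left (lt_of_mul_lt_mul_right ?_ hk0.le) hn
  calc ((k + m - 1).choose k : ℝ) * (∫ t in (0)..p, t ^ k * (1 - t) ^ (m - 1)) * k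
      = (k + m - 1).choose (k - 1) * (m * ∫ t in (0)..p, t ^ k * (1 - t) ^ (m - 1)) := by
        rw [mul_right_comm, hchoose]; ring
    _ < (k + m - 1).choose (k - 1) * (k * ∫ t in (0)..(1 - p), t ^ m * (1 - t) ^ (k - 1)) :=
        mul_lt_mul_of_pos_left core hC
    _ = _ := by ring

theorem simmons_inequality (n k : ℕ) (hn : 2 ≤ n) (hk1 : 1 ≤ k) (hk : 2 * k < n) :
    binomCdf n ((k : ℝ) / n) (k - 1) > 1 - binomCdf n ((k : ℝ) / n) k :=
  simmons_inequality_general n k hk1 hk
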